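/- arXiv:math/0703005 — 2 statements merged into one kernel-verified Lean document; each statement's English description precedes it below -/
import Mathlib

section
/- Let V be a finite-dimensional representation of sl₂ over a field of characteristic zero, with standard generators acting as operators Λ', L, H satisfying [Λ',L]=H, [H,L]=-2L, [H,Λ']=2Λ'. Suppose ⟨,⟩ is a bilinear form on V such that ⟨Lx, y⟩ = ⟨x, Ly⟩ and ⟨Hx, y⟩ = -⟨x, Hy⟩. If x and y are primitive vectors (Λ'x = Λ'y = 0) that are eigenvectors of H with distinct eigenvalues, then ⟨L^{i₁} x, L^{i₂} y⟩ = 0 for all i₁, i₂ ≥ 0. -/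
/-!
The operators `Λ', L, H` form an `sl₂`-triple in `Module.End K V`, so `x` and `y` are primitive
vectors in Mathlib's sense; finite dimensionality forces their weights to be natural numbers
`m ≠ k`, with `L ^ n x = 0` for `n > m` and `L ^ n y = 0` for `n > k`. Since `L` is self-adjoint,
`⟨L^i₁ x, L^i₂ y⟩ = ⟨x, L^n y⟩ = ⟨L^n x, y⟩` with `n = i₁ + i₂`. Since `H` is skew-adjoint, this
vanishes unless the weights `m` and `k - 2n` of `x` and `L^n y` cancel; but then `m + k = 2n`
with `m ≠ k`, so one of `L^n x`, `L^n y` is already zero.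
-/

namespace LinearMap

theorem IsAdjointPair.pow {R M N : Type*} [CommSemiring R] [AddCommMonoid M] [Module R M]
    [AddCommMonoid N] [Module R N] {B : M →ₗ[R] M →ₗ[R] N} {f g : Module.End R M}
    (h : IsAdjointPair B B f g) : ∀ n : ℕ, IsAdjointPair B B ⇑(f ^ n) ⇑(g ^ n)
  | 0 => isAdjointPair_one
  | n + 1 => by rw [pow_succ, pow_succ']; exact (h.pow n).mul h

theorem IsSkewAdjoint.apply_eq_zero_of_add_ne_zero {R M : Type*} [CommRing R] [NoZeroDivisors R]
    [AddCommGroup M] [Module R M] {B : M →ₗ[R] M →ₗ[R] R} {f : M → M}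
    (hf : B.IsSkewAdjoint f) {u v : M} {c d : R} (hu : f u = c • u) (hv : f v = d • v)
    (hcd : c + d ≠ 0) : B u v = 0 := by
  have h := hf u v
  rw [hu, Pi.neg_apply, hv, map_smul, map_neg, map_smul, smul_apply, smul_eq_mul,
    smul_eq_mul] at h
  have h' : (c + d) * B u v = 0 := by linear_combination h
  exact (mul_eq_zero.mp h').resolve_left hcd

end LinearMap

section

attribute [local instance 100] LieRing.ofAssociativeRing

theorem IsSl2Triple.of_commutators {A : Type*} [Ring A] {h e f : A} (hh : h ≠ 0)
    (hef : e * f - f * e = h) (hhe : h * e - e * h = (2 : ℤ) • e)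
    (hhf : h * f - f * h = (-2 : ℤ) • f) : IsSl2Triple h e f where
  h_ne_zero := hh
  lie_e_f := by rw [Ring.lie_def, hef]
  lie_h_e_nsmul := by rw [Ring.lie_def, hhe]; norm_num
  lie_h_f_nsmul := by rw [Ring.lie_def, hhf]; simp

namespace IsSl2Triple.HasPrimitiveVectorWith

variable {K V : Type*} [Field K] [AddCommGroup V] [Module K V] {h e f : Module.End K V}
  {t : IsSl2Triple h e f} {v : V} {μ : K}

theorem h_apply_pow_f_apply (P : t.HasPrimitiveVectorWith v μ) (n : ℕ) :
    h ((f ^ n) v) = (μ - 2 * n) • (f ^ n) v := by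
  simpa using P.lie_h_pow_toEnd_f n

theorem pow_f_apply_eq_zero_of_lt [CharZero K] [FiniteDimensional K V] {k n : ℕ}
    (P : t.HasPrimitiveVectorWith v (k : K)) (hkn : k < n) : (f ^ n) v = 0 :=
  Module.End.pow_map_zero_of_le hkn (by simpa using P.pow_toEnd_f_eq_zero_of_eq_nat rfl)

end IsSl2Triple.HasPrimitiveVectorWith

end

/-- For an sl₂-triple `(Λ', L, H)` of operators on a finite-dimensional vector space over a
field of characteristic zero, and a bilinear form with `⟨Lx,y⟩ = ⟨x,Ly⟩` and
`⟨Hx,y⟩ = -⟨x,Hy⟩`, any two primitive `H`-eigenvectors with distinct eigenvalues generate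
orthogonal Lefschetz strings. -/
theorem primitive_distinct_weights_orthogonal
    {K V : Type*} [Field K] [CharZero K] [AddCommGroup V] [Module K V] [FiniteDimensional K V]
    (Λ' L H : Module.End K V)
    (hΛL : Λ' * L - L * Λ' = H)
    (hHL : H * L - L * H = (-2 : ℤ) • L)
    (hHΛ : H * Λ' - Λ' * H = (2 : ℤ) • Λ')
    (B : V →ₗ[K] V →ₗ[K] K)
    (hBL : ∀ x y : V, B (L x) y = B x (L y))
    (hBH : ∀ x y : V, B (H x) y = - B x (H y))
    (x y : V) (hx : Λ' x = 0) (hy : Λ' y = 0)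
    (a b : K) (hax : H x = a • x) (hby : H y = b • y) (hab : a ≠ b) :
    ∀ i₁ i₂ : ℕ, B ((L ^ i₁) x) ((L ^ i₂) y) = 0 := by
  intro i₁ i₂
  rcases eq_or_ne x 0 with rfl | hx0
  · simp
  rcases eq_or_ne y 0 with rfl | hy0
  · simp
  have hH0 : H ≠ 0 := by
    rintro rfl
    simp [eq_comm, hx0, hy0] at hax hby
    exact hab (hax.trans hby.symm)
  -- Introduced only here: its `AddCommGroup` would otherwise be the one behind `-` and `•` above.
  let _ : LieRing (Module.End K V) := LieRing.ofAssociativeRing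
  have t : IsSl2Triple H Λ' L := .of_commutators hH0 hΛL hHΛ hHL
  have Px : t.HasPrimitiveVectorWith x a := ⟨hx0, hax, hx⟩
  have Py : t.HasPrimitiveVectorWith y b := ⟨hy0, hby, hy⟩
  obtain ⟨m, rfl⟩ := Px.exists_nat
  obtain ⟨k, rfl⟩ := Py.exists_nat
  have hL := (show B.IsSelfAdjoint L from hBL).pow
  have hH : B.IsSkewAdjoint H := fun u v ↦ by rw [hBH, Pi.neg_apply, map_neg]
  set n := i₁ + i₂
  have hshift : B ((L ^ i₁) x) ((L ^ i₂) y) = B x ((L ^ n) y) := by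
    rw [hL i₁, ← Module.End.mul_apply, ← pow_add]
  rw [hshift]
  by_cases hweights : (m : K) + (k - 2 * n) = 0
  · have hmk : m + k = 2 * n := by
      exact_mod_cast (by linear_combination hweights : (m + k : K) = 2 * n)
    rcases lt_or_gt_of_ne (fun h ↦ hab (congrArg _ h) : m ≠ k) with hlt | hlt
    · rw [← hL n, Px.pow_f_apply_eq_zero_of_lt (by omega), map_zero, LinearMap.zero_apply]
    · rw [Py.pow_f_apply_eq_zero_of_lt (by omega), map_zero]
  · exact hH.apply_eq_zero_of_add_ne_zero hax (Py.h_apply_pow_f_apply n) hweights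
end

section
/- Fix n ≥ 1 and let P(x) = x·∏_{i=1}^{n-1}(x² - i²) ∈ ℚ[x] and R(x) = P(x)³. Then there exists an odd polynomial s(x) ∈ ℚ[x] (i.e. s(-x) = -s(x)) such that for every endomorphism A of a finite-dimensional ℚ-vector space with R(A) = 0, the operator s(A) is semisimple (diagonalizable over the algebraic closure), A - s(A) is nilpotent, and s(A) commutes with A; that is, s(A) is the semisimple part of the Jordan–Chevalley decomposition of A. -/
open Polynomial AdjoinRoot

/-!
In `K[X]/(R)` with `R ∣ P ^ k` and `P` separable, the class `x` of `X` has `P(x)` nilpotent and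
`P'(x)` a unit, so Newton's method yields a unique root `r` of `P` with `x - r` nilpotent; any
lift `s` of `r` gives the Jordan–Chevalley decomposition `A = s(A) + (A - s(A))` of every `A`
with `R(A) = 0`. When `P` and `R` are odd, `X ↦ -X` induces an automorphism `σ` of `K[X]/(R)`
and `-σ(r)` is again such a root, so `-σ(r) = r` by uniqueness: the odd part of a lift of `r`
is still a lift of `r`.
-/

namespace Polynomial

section CommRing

variable {K : Type*} [CommRing K]

lemma X_mul_prod_X_sq_sub_sq_eq_prod_X_sub (m : ℕ) :
    (X : K[X]) * ∏ i ∈ Finset.Icc 1 m, (X ^ 2 - C ((i : K) ^ 2)) =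
      ∏ j ∈ Finset.Icc (-(m : ℤ)) m, (X - C (j : K)) := by
  induction m with
  | zero => simp
  | succ m ih =>
    have hIcc : Finset.Icc (-((m + 1 : ℕ) : ℤ)) (m + 1 : ℕ) =
        insert (-(m + 1 : ℤ)) (insert (m + 1 : ℤ) (Finset.Icc (-(m : ℤ)) m)) := by
      ext k; simp only [Finset.mem_Icc, Finset.mem_insert]; omega
    rw [Finset.prod_Icc_succ_top (by omega), ← mul_assoc, ih, hIcc,
      Finset.prod_insert (by simp; omega), Finset.prod_insert (by simp)]
    push_cast
    simp only [map_neg, C_pow, C_add, C_1]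
    ring

lemma X_mul_prod_X_sq_sub_sq_comp_neg_X (m : ℕ) :
    ((X : K[X]) * ∏ i ∈ Finset.Icc 1 m, (X ^ 2 - C ((i : K) ^ 2))).comp (-X) =
      -(X * ∏ i ∈ Finset.Icc 1 m, (X ^ 2 - C ((i : K) ^ 2))) := by
  simp only [mul_comp, prod_comp, sub_comp, pow_comp, X_comp, C_comp, neg_sq, neg_mul]

lemma aeval_neg_of_comp_neg_X {A : Type*} [CommRing A] [Algebra K A] {p : K[X]}
    (hp : p.comp (-X) = -p) (x : A) : aeval (-x) p = -aeval x p := by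
  rw [← map_neg, ← hp, aeval_comp, map_neg, aeval_X]

end CommRing

section Field

variable {K : Type*} [Field K]

lemma separable_X_mul_prod_X_sq_sub_sq [CharZero K] (m : ℕ) :
    ((X : K[X]) * ∏ i ∈ Finset.Icc 1 m, (X ^ 2 - C ((i : K) ^ 2))).Separable := by
  rw [X_mul_prod_X_sq_sub_sq_eq_prod_X_sub]
  exact separable_prod_X_sub_C_iff'.mpr fun _ _ _ _ h => Int.cast_injective h

noncomputable def oddPart (q : K[X]) : K[X] :=
  (2⁻¹ : K) • (q - q.comp (-X))

lemma oddPart_comp_neg_X (q : K[X]) :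
    (oddPart q).comp (-X) = -oddPart q := by
  simp only [oddPart, smul_comp, sub_comp, comp_assoc, neg_comp, X_comp, neg_neg, comp_X]
  rw [← smul_neg, neg_sub]

end Field

end Polynomial

namespace AdjoinRoot

variable {K : Type*} [Field K] {P R : K[X]}

theorem existsUnique_isNilpotent_root_sub_and_aeval_eq_zero {k : ℕ} (hP : P.Separable)
    (hR : R ∣ P ^ k) : ∃! r : AdjoinRoot R, IsNilpotent (root R - r) ∧ aeval r P = 0 := by
  apply existsUnique_nilpotent_sub_and_aeval_eq_zero <;> rw [aeval_eq]
  · exact ⟨k, by rwa [← map_pow, mk_eq_zero]⟩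
  · obtain ⟨a, b, hab⟩ := hP.pow_left.of_isCoprime_of_dvd_left hR
    exact .of_mul_eq_one_right (mk R b) (by simpa using congrArg (mk R) hab)

theorem exists_odd_isNilpotent_root_sub_mk_and_aeval_mk_eq_zero [NeZero (2 : K)] {k : ℕ}
    (hP : P.Separable) (hR : R ∣ P ^ k) (hPodd : P.comp (-X) = -P) (hRodd : R.comp (-X) = -R) :
    ∃ s : K[X], s.comp (-X) = -s ∧ IsNilpotent (root R - mk R s) ∧ aeval (mk R s) P = 0 := by
  obtain ⟨r, ⟨hnil, hr⟩, huniq⟩ := existsUnique_isNilpotent_root_sub_and_aeval_eq_zero hP hR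
  obtain ⟨s, rfl⟩ := mk_surjective r
  let σ := liftAlgHom R (Algebra.ofId K _) (-root R) (by
    change aeval (-root R) R = 0
    rw [aeval_neg_of_comp_neg_X hRodd, aeval_eq, mk_self, neg_zero])
  have hσ (q : K[X]) : σ (mk R q) = mk R (q.comp (-X)) := by
    change aeval (-root R) q = _
    rw [← aeval_eq, aeval_comp, map_neg, aeval_X]
  have hσroot : σ (root R) = -root R := liftAlgHom_root ..
  have hsym : -σ (mk R s) = mk R s := by
    refine huniq _ ⟨?_, ?_⟩
    · rw [← neg_neg (root R), ← hσroot, ← neg_sub', ← map_sub]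
      exact (hnil.map σ).neg
    · rw [aeval_neg_of_comp_neg_X hPodd, aeval_algHom_apply, hr, map_zero, neg_zero]
  refine ⟨oddPart s, oddPart_comp_neg_X s, ?_⟩
  have hmk : mk R (oddPart s) = mk R s := by
    rw [oddPart, ← aeval_eq, map_smul, map_sub, aeval_eq, aeval_eq, ← hσ, sub_eq_add_neg, hsym,
      ← two_smul K, smul_smul, inv_mul_cancel₀ two_ne_zero, one_smul]
  rw [hmk]
  exact ⟨hnil, hr⟩

theorem isSemisimple_map_and_isNilpotent_sub_map_and_commute {V : Type*} [AddCommGroup V]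
    [Module K V] (hP : Squarefree P) (φ : AdjoinRoot R →ₐ[K] Module.End K V) {r : AdjoinRoot R}
    (hnil : IsNilpotent (root R - r)) (hr : aeval r P = 0) :
    (φ r).IsSemisimple ∧ IsNilpotent (φ (root R) - φ r) ∧ Commute (φ (root R)) (φ r) := by
  refine ⟨Module.End.isSemisimple_of_squarefree_aeval_eq_zero hP ?_, ?_, (Commute.all _ _).map φ⟩
  · rw [aeval_algHom_apply, hr, map_zero]
  · rw [← map_sub]
    exact hnil.map φ

end AdjoinRoot

theorem odd_semisimple_part_polynomial_general (n : ℕ)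
    (P : Polynomial ℚ)
    (hPdef : P = X * ∏ i ∈ Finset.Icc 1 (n - 1), (X ^ 2 - C ((i : ℚ) ^ 2)))
    (R : Polynomial ℚ) (hRdef : R = P ^ 3) :
    ∃ s : Polynomial ℚ, s.comp (-X) = -s ∧
      ∀ (V : Type) [AddCommGroup V] [Module ℚ V] [FiniteDimensional ℚ V]
        (A : Module.End ℚ V), Polynomial.aeval A R = 0 →
          (Polynomial.aeval A s).IsSemisimple ∧
          IsNilpotent (A - Polynomial.aeval A s) ∧
          Commute A (Polynomial.aeval A s) := by
  have hP : P.Separable := hPdef ▸ separable_X_mul_prod_X_sq_sub_sq (n - 1)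
  have hPodd : P.comp (-X) = -P := hPdef ▸ X_mul_prod_X_sq_sub_sq_comp_neg_X (n - 1)
  have hRodd : R.comp (-X) = -R := by rw [hRdef, pow_comp, hPodd, Odd.neg_pow (by decide)]
  obtain ⟨s, hs, hnil, hroot⟩ :=
    exists_odd_isNilpotent_root_sub_mk_and_aeval_mk_eq_zero hP hRdef.dvd hPodd hRodd
  refine ⟨s, hs, fun V _ _ _ A hA => ?_⟩
  let φ : AdjoinRoot R →ₐ[ℚ] Module.End ℚ V := Ideal.Quotient.liftₐ _ (aeval A) fun q hq => by
    obtain ⟨c, rfl⟩ := Ideal.mem_span_singleton.mp hq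
    rw [map_mul, hA, zero_mul]
  have hφs : φ (mk R s) = aeval A s := rfl
  have hφroot : φ (root R) = A := aeval_X A
  rw [← hφs, ← hφroot]
  exact isSemisimple_map_and_isNilpotent_sub_map_and_commute hP.squarefree φ hnil hroot

/-- For `P(x) = x·∏_{i=1}^{n-1}(x² - i²)` and `R = P³`, there is an odd polynomial
`s ∈ ℚ[x]` which uniformly gives the semisimple part of the Jordan–Chevalley
decomposition of any endomorphism `A` (of a finite-dimensional `ℚ`-vector space)
annihilated by `R`. -/
theorem odd_semisimple_part_polynomial (n : ℕ) (hn : 1 ≤ n)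
    (P : Polynomial ℚ)
    (hPdef : P = X * ∏ i ∈ Finset.Icc 1 (n - 1), (X ^ 2 - C ((i : ℚ) ^ 2)))
    (R : Polynomial ℚ) (hRdef : R = P ^ 3) :
    ∃ s : Polynomial ℚ, s.comp (-X) = -s ∧
      ∀ (V : Type) [AddCommGroup V] [Module ℚ V] [FiniteDimensional ℚ V]
        (A : Module.End ℚ V), Polynomial.aeval A R = 0 →
          (Polynomial.aeval A s).IsSemisimple ∧
          IsNilpotent (A - Polynomial.aeval A s) ∧
          Commute A (Polynomial.aeval A s) :=
  odd_semisimple_part_polynomial_general n P hPdef R hRdef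
end
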